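/- (Remark 2.1, existence of a minimaximizer between consecutive minimizers) Assume in addition that there exists δ > 0 with ∂₁∂₂h(ξ,η) ≤ -δ for all (ξ,η), that all second-order partial derivatives of h are bounded on ℝ², and that every stationary configuration is a nondegenerate critical point of W_pq viewed as a function on ℝ^q (W_pq is a Morse function). Let x, x' ∈ X_pq be global minimizers of W_pq with x ≺ x' that are consecutive: no global minimizer w satisfies x ≺ w ≺ x'. Then there exists a stationary configuration y ∈ X_pq with x ≺ y ≺ x' which is not a global minimizer of W_pq. -/

import Mathlib

/-- First partial derivative of the generating function. -/
noncomputable def pd1 (h : ℝ → ℝ → ℝ) (a b : ℝ) : ℝ := deriv (fun s => h s b) a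

/-- Second partial derivative of the generating function. -/
noncomputable def pd2 (h : ℝ → ℝ → ℝ) (a b : ℝ) : ℝ := deriv (fun s => h a s) b

/-- Mixed second partial derivative ∂₁∂₂h. -/
noncomputable def pd12 (h : ℝ → ℝ → ℝ) (a b : ℝ) : ℝ := deriv (fun s => pd2 h s b) a

/-- The space of (p,q)-configurations: x (n+q) = x n + p. -/
def IsConfig (p : ℤ) (q : ℕ) (x : ℤ → ℝ) : Prop := ∀ n : ℤ, x (n + (q : ℤ)) = x n + (p : ℝ)

/-- Stationary configuration: the gradient of the action vanishes. -/
def Stationary (h : ℝ → ℝ → ℝ) (x : ℤ → ℝ) : Prop :=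
  ∀ k : ℤ, pd2 h (x (k - 1)) (x k) + pd1 h (x k) (x (k + 1)) = 0

/-- The periodic action W_pq. -/
noncomputable def W (h : ℝ → ℝ → ℝ) (q : ℕ) (x : ℤ → ℝ) : ℝ :=
  ∑ k ∈ Finset.range q, h (x (k : ℤ)) (x ((k : ℤ) + 1))

/-- Extension of a finite vector u ∈ ℝ^q to ℕ, with the convention u_q = u_0 + p. -/
noncomputable def extQ (p : ℤ) {q : ℕ} (hq : 0 < q) (u : Fin q → ℝ) (n : ℕ) : ℝ :=
  u ⟨n % q, Nat.mod_lt n hq⟩ + ((n / q : ℕ) : ℝ) * (p : ℝ)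

/-- The periodic action viewed as a function Φ on ℝ^q. -/
noncomputable def Phi (h : ℝ → ℝ → ℝ) (p : ℤ) {q : ℕ} (hq : 0 < q) (u : Fin q → ℝ) : ℝ :=
  ∑ k ∈ Finset.range q, h (extQ p hq u k) (extQ p hq u (k + 1))


open Function

variable {h : ℝ → ℝ → ℝ}

section DerivBasics

lemma hasDerivAt_slice1 (hC2 : ContDiff ℝ 2 (Function.uncurry h)) (a b : ℝ) :
    HasDerivAt (fun s => h s b) (fderiv ℝ (Function.uncurry h) (a, b) (1, 0)) a := by
  have hH : DifferentiableAt ℝ (Function.uncurry h) (a, b) :=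
    (hC2.differentiable (by norm_num)).differentiableAt
  have h1 : HasDerivAt (fun s : ℝ => ((s, b) : ℝ × ℝ)) ((1 : ℝ), (0 : ℝ)) a :=
    (hasDerivAt_id a).prodMk (hasDerivAt_const a b)
  simpa [Function.uncurry, Function.comp_def] using hH.hasFDerivAt.comp_hasDerivAt a h1

lemma hasDerivAt_slice2 (hC2 : ContDiff ℝ 2 (Function.uncurry h)) (a b : ℝ) :
    HasDerivAt (fun t => h a t) (fderiv ℝ (Function.uncurry h) (a, b) (0, 1)) b := by
  have hH : DifferentiableAt ℝ (Function.uncurry h) (a, b) :=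
    (hC2.differentiable (by norm_num)).differentiableAt
  have h1 : HasDerivAt (fun t : ℝ => ((a, t) : ℝ × ℝ)) ((0 : ℝ), (1 : ℝ)) b :=
    (hasDerivAt_const b a).prodMk (hasDerivAt_id b)
  simpa [Function.uncurry, Function.comp_def] using hH.hasFDerivAt.comp_hasDerivAt b h1

lemma pd1_eq (hC2 : ContDiff ℝ 2 (Function.uncurry h)) (a b : ℝ) : pd1 h a b = fderiv ℝ (Function.uncurry h) (a, b) (1, 0) :=
  (hasDerivAt_slice1 hC2 a b).deriv

lemma pd2_eq (hC2 : ContDiff ℝ 2 (Function.uncurry h)) (a b : ℝ) : pd2 h a b = fderiv ℝ (Function.uncurry h) (a, b) (0, 1) :=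
  (hasDerivAt_slice2 hC2 a b).deriv

lemma hasDerivAt_pd1 (hC2 : ContDiff ℝ 2 (Function.uncurry h)) (a b : ℝ) : HasDerivAt (fun s => h s b) (pd1 h a b) a := by
  rw [pd1_eq hC2]; exact hasDerivAt_slice1 hC2 a b

lemma hasDerivAt_pd2 (hC2 : ContDiff ℝ 2 (Function.uncurry h)) (a b : ℝ) : HasDerivAt (fun t => h a t) (pd2 h a b) b := by
  rw [pd2_eq hC2]; exact hasDerivAt_slice2 hC2 a b

end DerivBasics
section Lip

lemma fderiv2_bound (hC2 : ContDiff ℝ 2 (Function.uncurry h)) {C : ℝ}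
    (hbd : ∀ v : ℝ × ℝ, ‖iteratedFDeriv ℝ 2 (Function.uncurry h) v‖ ≤ C)
    (v : ℝ × ℝ) : ‖fderiv ℝ (fderiv ℝ (Function.uncurry h)) v‖ ≤ C := by
  have hC0 : 0 ≤ C := le_trans (norm_nonneg _) (hbd v)
  apply ContinuousLinearMap.opNorm_le_bound _ hC0
  intro u
  apply ContinuousLinearMap.opNorm_le_bound _ (mul_nonneg hC0 (norm_nonneg u))
  intro w
  have h2 := (iteratedFDeriv_two_apply (𝕜 := ℝ) (Function.uncurry h) v ![u, w]).symm
  simp only [Matrix.cons_val_zero, Matrix.cons_val_one, Matrix.head_cons] at h2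
  rw [h2]
  calc ‖iteratedFDeriv ℝ 2 (Function.uncurry h) v ![u, w]‖
      ≤ ‖iteratedFDeriv ℝ 2 (Function.uncurry h) v‖ * ∏ i, ‖(![u, w]) i‖ :=
        ContinuousMultilinearMap.le_opNorm _ _
    _ ≤ C * (‖u‖ * ‖w‖) := by
        rw [Fin.prod_univ_two]
        simp only [Matrix.cons_val_zero, Matrix.cons_val_one, Matrix.head_cons]
        exact mul_le_mul_of_nonneg_right (hbd v) (by positivity)
    _ = C * ‖u‖ * ‖w‖ := by ring

lemma fderiv_diff (hC2 : ContDiff ℝ 2 (Function.uncurry h)) :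
    Differentiable ℝ (fderiv ℝ (Function.uncurry h)) := by
  have h1 : ContDiff ℝ 1 (fderiv ℝ (Function.uncurry h)) :=
    hC2.fderiv_right (m := 1) (by norm_num)
  exact h1.differentiable one_ne_zero

lemma fderiv_lip (hC2 : ContDiff ℝ 2 (Function.uncurry h)) {C : ℝ}
    (hbd : ∀ v : ℝ × ℝ, ‖iteratedFDeriv ℝ 2 (Function.uncurry h) v‖ ≤ C) (v w : ℝ × ℝ) :
    ‖fderiv ℝ (Function.uncurry h) v - fderiv ℝ (Function.uncurry h) w‖ ≤ C * ‖v - w‖ :=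
  Convex.norm_image_sub_le_of_norm_fderiv_le
    (fun z _ => (fderiv_diff hC2).differentiableAt)
    (fun z _ => fderiv2_bound hC2 hbd z) convex_univ (Set.mem_univ w) (Set.mem_univ v)

lemma pd_lip_aux (hC2 : ContDiff ℝ 2 (Function.uncurry h)) {C : ℝ}
    (hbd : ∀ v : ℝ × ℝ, ‖iteratedFDeriv ℝ 2 (Function.uncurry h) v‖ ≤ C)
    (a b a' b' : ℝ) (e : ℝ × ℝ) (he : ‖e‖ ≤ 1) :
    |fderiv ℝ (Function.uncurry h) (a, b) e - fderiv ℝ (Function.uncurry h) (a', b') e|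
      ≤ C * (|a - a'| + |b - b'|) := by
  have h1 : |fderiv ℝ (Function.uncurry h) (a, b) e - fderiv ℝ (Function.uncurry h) (a', b') e|
      = ‖(fderiv ℝ (Function.uncurry h) (a, b) - fderiv ℝ (Function.uncurry h) (a', b')) e‖ := by
    simp [Real.norm_eq_abs]
  rw [h1]
  calc ‖(fderiv ℝ (Function.uncurry h) (a, b) - fderiv ℝ (Function.uncurry h) (a', b')) e‖
      ≤ ‖fderiv ℝ (Function.uncurry h) (a, b) - fderiv ℝ (Function.uncurry h) (a', b')‖ * ‖e‖ :=
        ContinuousLinearMap.le_opNorm _ _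
    _ ≤ (C * ‖((a, b) : ℝ × ℝ) - (a', b')‖) * 1 := by
        apply mul_le_mul (fderiv_lip hC2 hbd _ _) he (norm_nonneg _)
        have := norm_nonneg (((a, b) : ℝ × ℝ) - (a', b'))
        have hC0 : 0 ≤ C := le_trans (norm_nonneg _) (hbd (0, 0))
        positivity
    _ ≤ C * (|a - a'| + |b - b'|) := by
        rw [mul_one]
        have hC0 : 0 ≤ C := le_trans (norm_nonneg _) (hbd (0, 0))
        apply mul_le_mul_of_nonneg_left _ hC0
        rw [Prod.norm_def]
        simp only [Prod.fst_sub, Prod.snd_sub, Real.norm_eq_abs]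
        exact max_le (by linarith [abs_nonneg (b - b')]) (by linarith [abs_nonneg (a - a')])

lemma pd1_lip (hC2 : ContDiff ℝ 2 (Function.uncurry h)) {C : ℝ}
    (hbd : ∀ v : ℝ × ℝ, ‖iteratedFDeriv ℝ 2 (Function.uncurry h) v‖ ≤ C)
    (a b a' b' : ℝ) : |pd1 h a b - pd1 h a' b'| ≤ C * (|a - a'| + |b - b'|) := by
  rw [pd1_eq hC2, pd1_eq hC2]
  exact pd_lip_aux hC2 hbd a b a' b' (1, 0) (by rw [Prod.norm_def]; simp)

lemma pd2_lip (hC2 : ContDiff ℝ 2 (Function.uncurry h)) {C : ℝ}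
    (hbd : ∀ v : ℝ × ℝ, ‖iteratedFDeriv ℝ 2 (Function.uncurry h) v‖ ≤ C)
    (a b a' b' : ℝ) : |pd2 h a b - pd2 h a' b'| ≤ C * (|a - a'| + |b - b'|) := by
  rw [pd2_eq hC2, pd2_eq hC2]
  exact pd_lip_aux hC2 hbd a b a' b' (0, 1) (by rw [Prod.norm_def]; simp)

lemma pd1_cont (hC2 : ContDiff ℝ 2 (Function.uncurry h)) :
    Continuous (fun v : ℝ × ℝ => pd1 h v.1 v.2) := by
  have : (fun v : ℝ × ℝ => pd1 h v.1 v.2)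
      = fun v : ℝ × ℝ => fderiv ℝ (Function.uncurry h) v ((1 : ℝ), (0 : ℝ)) := by
    funext v; exact pd1_eq hC2 v.1 v.2
  rw [this]
  exact (hC2.continuous_fderiv two_ne_zero).clm_apply continuous_const

lemma pd2_cont (hC2 : ContDiff ℝ 2 (Function.uncurry h)) :
    Continuous (fun v : ℝ × ℝ => pd2 h v.1 v.2) := by
  have : (fun v : ℝ × ℝ => pd2 h v.1 v.2)
      = fun v : ℝ × ℝ => fderiv ℝ (Function.uncurry h) v ((0 : ℝ), (1 : ℝ)) := by
    funext v; exact pd2_eq hC2 v.1 v.2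
  rw [this]
  exact (hC2.continuous_fderiv two_ne_zero).clm_apply continuous_const

lemma diff_pd2_left (hC2 : ContDiff ℝ 2 (Function.uncurry h)) (b : ℝ) :
    Differentiable ℝ (fun s => pd2 h s b) := by
  have : (fun s => pd2 h s b) = fun s => fderiv ℝ (Function.uncurry h) (s, b) ((0:ℝ), (1:ℝ)) := by
    funext s; exact pd2_eq hC2 s b
  rw [this]
  exact (((fderiv_diff hC2).comp (differentiable_id.prodMk (differentiable_const b)))).clm_apply
    (differentiable_const _)

end Lip
section Mono

lemma antitone_deriv_nonpos {g : ℝ → ℝ} {g' : ℝ} {a : ℝ}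
    (hg : HasDerivAt g g' a) (ha : Antitone g) : g' ≤ 0 := by
  have ht := hasDerivAt_iff_tendsto_slope.mp hg
  refine le_of_tendsto ht ?_
  filter_upwards [self_mem_nhdsWithin] with y hy
  rcases lt_or_gt_of_ne (Set.mem_compl_singleton_iff.mp hy) with hlt | hgt
  · rw [slope_def_field]
    have h1 : g a ≤ g y := ha hlt.le
    have h2 : y - a < 0 := by linarith
    exact div_nonpos_of_nonneg_of_nonpos (by linarith) h2.le
  · rw [slope_def_field]
    have h1 : g y ≤ g a := ha hgt.le
    have h2 : 0 < y - a := by linarith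
    exact div_nonpos_of_nonpos_of_nonneg (by linarith) h2.le

lemma M1 (hC2 : ContDiff ℝ 2 (Function.uncurry h)) {δ : ℝ}
    (hδ' : ∀ a b : ℝ, pd12 h a b ≤ -δ) (a b t : ℝ) (ht : 0 ≤ t) :
    pd2 h (a + t) b ≤ pd2 h a b - δ * t := by
  have hdiff := diff_pd2_left hC2 b
  have hg : Differentiable ℝ (fun s => pd2 h s b + δ * s) :=
    hdiff.add ((differentiable_id.const_mul δ))
  have hder : ∀ s, deriv (fun s => pd2 h s b + δ * s) s ≤ 0 := by
    intro s
    have h1 : HasDerivAt (fun s' => pd2 h s' b) (pd12 h s b) s := by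
      have := (hdiff s).hasDerivAt
      rwa [show deriv (fun s' => pd2 h s' b) s = pd12 h s b from rfl] at this
    have h2 : HasDerivAt (fun s' : ℝ => δ * s') δ s := by
      simpa using (hasDerivAt_id s).const_mul δ
    rw [(show HasDerivAt (fun s => pd2 h s b + δ * s) (pd12 h s b + δ) s from h1.add h2).deriv]
    linarith [hδ' s b]
  have hanti := antitone_of_deriv_nonpos hg hder
  have := hanti (show a ≤ a + t by linarith)
  simp only at this
  linarith

lemma M2 (hC2 : ContDiff ℝ 2 (Function.uncurry h)) {δ : ℝ} (hδ0 : 0 ≤ δ)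
    (hδ' : ∀ a b : ℝ, pd12 h a b ≤ -δ) (a b t : ℝ) (ht : 0 ≤ t) :
    pd1 h a (b + t) ≤ pd1 h a b - δ * t := by
  -- the function φ ξ := h ξ (b+t) - h ξ b + δ*t*ξ is antitone
  have hanti : Antitone (fun ξ => h ξ (b + t) - h ξ b + δ * t * ξ) := by
    intro ξ₁ ξ₂ hle
    simp only
    -- use ψ η := h ξ₂ η - h ξ₁ η + δ*(ξ₂-ξ₁)*η antitone in η
    have hψ : Antitone (fun η => h ξ₂ η - h ξ₁ η + δ * (ξ₂ - ξ₁) * η) := by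
      have hdiff : Differentiable ℝ (fun η => h ξ₂ η - h ξ₁ η + δ * (ξ₂ - ξ₁) * η) := by
        have d1 : Differentiable ℝ (fun η => h ξ₂ η) :=
          fun η => (hasDerivAt_pd2 hC2 ξ₂ η).differentiableAt
        have d2 : Differentiable ℝ (fun η => h ξ₁ η) :=
          fun η => (hasDerivAt_pd2 hC2 ξ₁ η).differentiableAt
        exact (d1.sub d2).add (differentiable_id.const_mul _)
      apply antitone_of_deriv_nonpos hdiff
      intro η
      have hd : HasDerivAt (fun η => h ξ₂ η - h ξ₁ η + δ * (ξ₂ - ξ₁) * η)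
          (pd2 h ξ₂ η - pd2 h ξ₁ η + δ * (ξ₂ - ξ₁)) η := by
        have := ((hasDerivAt_pd2 hC2 ξ₂ η).sub (hasDerivAt_pd2 hC2 ξ₁ η)).add
          ((hasDerivAt_id η).const_mul (δ * (ξ₂ - ξ₁)))
        simpa [mul_comm, Pi.add_def, Pi.sub_def] using this
      rw [hd.deriv]
      have := M1 hC2 hδ' ξ₁ η (ξ₂ - ξ₁) (by linarith)
      have h2 : ξ₁ + (ξ₂ - ξ₁) = ξ₂ := by ring
      rw [h2] at this
      linarith
    have := hψ (show b ≤ b + t by linarith)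
    simp only at this
    nlinarith [this]
  have hφd : HasDerivAt (fun ξ => h ξ (b + t) - h ξ b + δ * t * ξ)
      (pd1 h a (b + t) - pd1 h a b + δ * t) a := by
    have := ((hasDerivAt_pd1 hC2 a (b + t)).sub (hasDerivAt_pd1 hC2 a b)).add
      ((hasDerivAt_id a).const_mul (δ * t))
    simpa [mul_comm, Pi.add_def, Pi.sub_def] using this
  have := antitone_deriv_nonpos hφd hanti
  linarith

end Mono

section Taylor

lemma taylor1D {f f' : ℝ → ℝ} {K : ℝ} (hK : 0 ≤ K)
    (hd : ∀ x, HasDerivAt f (f' x) x)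
    (hlip : ∀ x y, |f' x - f' y| ≤ K * |x - y|) (x s : ℝ) :
    f (x + s) ≤ f x + f' x * s + K / 2 * s ^ 2 := by
  set g : ℝ → ℝ := fun σ => f (x + σ) - f x - f' x * σ - K / 2 * σ ^ 2 with hgdef
  have hgd : ∀ σ, HasDerivAt g (f' (x + σ) - f' x - K * σ) σ := by
    intro σ
    have h1 : HasDerivAt (fun σ : ℝ => f (x + σ)) (f' (x + σ)) σ := by
      have := (hd (x + σ)).comp σ ((hasDerivAt_id σ).const_add x)
      simpa [Function.comp_def] using this
    have h2 : HasDerivAt (fun σ : ℝ => f x + f' x * σ + K / 2 * σ ^ 2)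
        (f' x + K * σ) σ := by
      have ha : HasDerivAt (fun σ : ℝ => f x) 0 σ := hasDerivAt_const σ _
      have hb : HasDerivAt (fun σ : ℝ => f' x * σ) (f' x) σ := by
        simpa using (hasDerivAt_id σ).const_mul (f' x)
      have hc : HasDerivAt (fun σ : ℝ => K / 2 * σ ^ 2) (K * σ) σ := by
        have := ((hasDerivAt_pow 2 σ)).const_mul (K / 2)
        exact this.congr_deriv (by simp; ring)
      have := (ha.add hb).add hc
      simpa [Pi.add_def] using this
    have := h1.sub h2
    have heq : (fun σ : ℝ => f (x + σ) - (f x + f' x * σ + K / 2 * σ ^ 2)) = g := by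
      funext σ; simp [hgdef]; ring
    simp only [Pi.sub_def] at this
    rw [heq] at this
    exact this.congr_deriv (by ring)
  have hg0 : g 0 = 0 := by simp [hgdef]
  have key : g s ≤ 0 := by
    rcases le_or_gt 0 s with hs | hs
    · have hmono : AntitoneOn g (Set.Ici 0) := by
        apply antitoneOn_of_deriv_nonpos (convex_Ici 0)
        · exact (fun σ _ => ((hgd σ).continuousAt.continuousWithinAt))
        · intro σ hσ
          exact (hgd σ).differentiableAt.differentiableWithinAt
        · intro σ hσ
          rw [(hgd σ).deriv]
          rw [interior_Ici] at hσ
          have h1 := hlip (x + σ) x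
          have h2 : |x + σ - x| = σ := by
            rw [show x + σ - x = σ by ring, abs_of_pos hσ]
          rw [h2] at h1
          have := abs_le.mp h1
          linarith [this.1, this.2]
      have := hmono (Set.self_mem_Ici) (Set.mem_Ici.mpr hs) hs
      rw [hg0] at this; exact this
    · have hmono : MonotoneOn g (Set.Iic 0) := by
        apply monotoneOn_of_deriv_nonneg (convex_Iic 0)
        · exact (fun σ _ => ((hgd σ).continuousAt.continuousWithinAt))
        · intro σ hσ
          exact (hgd σ).differentiableAt.differentiableWithinAt
        · intro σ hσ
          rw [(hgd σ).deriv]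
          rw [interior_Iic] at hσ
          have h1 := hlip (x + σ) x
          have h2 : |x + σ - x| = -σ := by
            rw [show x + σ - x = σ by ring, abs_of_neg hσ]
          rw [h2] at h1
          have := abs_le.mp h1
          linarith [this.1, this.2]
      have := hmono (Set.mem_Iic.mpr hs.le) (Set.self_mem_Iic) hs.le
      rw [hg0] at this; exact this
  have : f (x + s) - f x - f' x * s - K / 2 * s ^ 2 ≤ 0 := key
  linarith

lemma taylor2D (hC2 : ContDiff ℝ 2 (Function.uncurry h)) {C : ℝ} (hC0 : 0 ≤ C)
    (hbd : ∀ v : ℝ × ℝ, ‖iteratedFDeriv ℝ 2 (Function.uncurry h) v‖ ≤ C)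
    (a b s t : ℝ) :
    h (a + s) (b + t) ≤ h a b + pd1 h a b * s + pd2 h a b * t + C * (s ^ 2 + t ^ 2) := by
  have step1 : h (a + s) (b + t) ≤ h a (b + t) + pd1 h a (b + t) * s + C / 2 * s ^ 2 := by
    apply taylor1D hC0 (fun z => hasDerivAt_pd1 hC2 z (b + t))
    · intro z y
      have := pd1_lip hC2 hbd z (b + t) y (b + t)
      simpa using this
  have step2 : h a (b + t) ≤ h a b + pd2 h a b * t + C / 2 * t ^ 2 := by
    apply taylor1D hC0 (fun z => hasDerivAt_pd2 hC2 a z)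
    · intro z y
      have := pd2_lip hC2 hbd a z a y
      simpa using this
  have step3 : pd1 h a (b + t) * s ≤ pd1 h a b * s + C * |t| * |s| := by
    have h1 := pd1_lip hC2 hbd a (b + t) a b
    simp only [sub_self, abs_zero, zero_add] at h1
    have h2 : (pd1 h a (b + t) - pd1 h a b) * s ≤ |pd1 h a (b + t) - pd1 h a b| * |s| := by
      calc (pd1 h a (b + t) - pd1 h a b) * s ≤ |(pd1 h a (b + t) - pd1 h a b) * s| := le_abs_self _
        _ = |pd1 h a (b + t) - pd1 h a b| * |s| := abs_mul _ _
    have h3 : |pd1 h a (b + t) - pd1 h a b| * |s| ≤ C * |b + t - b| * |s| :=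
      mul_le_mul_of_nonneg_right h1 (abs_nonneg s)
    have h4 : |b + t - b| = |t| := by rw [show b + t - b = t by ring]
    rw [h4] at h3
    nlinarith [h2, h3]
  have habs : C * |t| * |s| ≤ C / 2 * (s ^ 2 + t ^ 2) := by
    nlinarith [sq_nonneg (|s| - |t|), abs_nonneg s, abs_nonneg t, sq_abs s, sq_abs t]
  nlinarith [step1, step2, step3, habs, sq_nonneg s, sq_nonneg t]

end Taylor
section Periodic

lemma pd1_per (hC2 : ContDiff ℝ 2 (Function.uncurry h))
    (hper : ∀ a b : ℝ, h (a + 1) (b + 1) = h a b) (a b : ℝ) :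
    pd1 h (a + 1) (b + 1) = pd1 h a b := by
  have hfun : (fun s => h s (b + 1)) = fun s => h (s - 1) b := by
    funext s
    rw [← hper (s - 1) b, sub_add_cancel]
  have hd : HasDerivAt (fun s => h s (b + 1)) (pd1 h a b) (a + 1) := by
    rw [hfun]
    have hinner : HasDerivAt (fun s : ℝ => s - 1) 1 (a + 1) := by
      simpa using (hasDerivAt_id (a + 1)).sub_const 1
    have houter : HasDerivAt (fun u => h u b) (pd1 h a b) ((a + 1) - 1) := by
      rw [show (a + 1) - 1 = a by ring]; exact hasDerivAt_pd1 hC2 a b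
    simpa [Function.comp_def] using houter.comp (a + 1) hinner
  exact hd.deriv

lemma pd2_per (hC2 : ContDiff ℝ 2 (Function.uncurry h))
    (hper : ∀ a b : ℝ, h (a + 1) (b + 1) = h a b) (a b : ℝ) :
    pd2 h (a + 1) (b + 1) = pd2 h a b := by
  have hfun : (fun t => h (a + 1) t) = fun t => h a (t - 1) := by
    funext t
    rw [← hper a (t - 1), sub_add_cancel]
  have hd : HasDerivAt (fun t => h (a + 1) t) (pd2 h a b) (b + 1) := by
    rw [hfun]
    have hinner : HasDerivAt (fun t : ℝ => t - 1) 1 (b + 1) := by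
      simpa using (hasDerivAt_id (b + 1)).sub_const 1
    have houter : HasDerivAt (fun u => h a u) (pd2 h a b) ((b + 1) - 1) := by
      rw [show (b + 1) - 1 = b by ring]; exact hasDerivAt_pd2 hC2 a b
    simpa [Function.comp_def] using houter.comp (b + 1) hinner
  exact hd.deriv

lemma pd1_shift (hC2 : ContDiff ℝ 2 (Function.uncurry h))
    (hper : ∀ a b : ℝ, h (a + 1) (b + 1) = h a b) (m : ℤ) (a b : ℝ) :
    pd1 h (a + (m : ℝ)) (b + (m : ℝ)) = pd1 h a b := by
  induction m using Int.induction_on with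
  | zero => simp
  | succ k ih =>
      push_cast at ih ⊢
      rw [show a + ((k : ℝ) + 1) = (a + (k : ℝ)) + 1 by ring,
        show b + ((k : ℝ) + 1) = (b + (k : ℝ)) + 1 by ring, pd1_per hC2 hper, ih]
  | pred k ih =>
      push_cast at ih ⊢
      have key := pd1_per hC2 hper (a + (-(k : ℝ) - 1)) (b + (-(k : ℝ) - 1))
      rw [show a + (-(k : ℝ) - 1) + 1 = a + -(k : ℝ) by ring,
        show b + (-(k : ℝ) - 1) + 1 = b + -(k : ℝ) by ring] at key
      rw [← key]
      exact ih

lemma pd2_shift (hC2 : ContDiff ℝ 2 (Function.uncurry h))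
    (hper : ∀ a b : ℝ, h (a + 1) (b + 1) = h a b) (m : ℤ) (a b : ℝ) :
    pd2 h (a + (m : ℝ)) (b + (m : ℝ)) = pd2 h a b := by
  induction m using Int.induction_on with
  | zero => simp
  | succ k ih =>
      push_cast at ih ⊢
      rw [show a + ((k : ℝ) + 1) = (a + (k : ℝ)) + 1 by ring,
        show b + ((k : ℝ) + 1) = (b + (k : ℝ)) + 1 by ring, pd2_per hC2 hper, ih]
  | pred k ih =>
      push_cast at ih ⊢
      have key := pd2_per hC2 hper (a + (-(k : ℝ) - 1)) (b + (-(k : ℝ) - 1))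
      rw [show a + (-(k : ℝ) - 1) + 1 = a + -(k : ℝ) by ring,
        show b + (-(k : ℝ) - 1) + 1 = b + -(k : ℝ) by ring] at key
      rw [← key]
      exact ih

end Periodic

section Config

/-- The "gradient" of the action at a configuration. -/
noncomputable def Vv (h : ℝ → ℝ → ℝ) (z : ℤ → ℝ) (k : ℤ) : ℝ :=
  pd2 h (z (k - 1)) (z k) + pd1 h (z k) (z (k + 1))

variable {p : ℤ} {q : ℕ}

lemma config_add_mul {z : ℤ → ℝ} (hz : IsConfig p q z) (m : ℤ) (n : ℤ) :
    z (n + m * (q : ℤ)) = z n + (m : ℝ) * (p : ℝ) := by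
  induction m using Int.induction_on with
  | zero => simp
  | succ k ih =>
      have h1 : n + ((k : ℤ) + 1) * (q : ℤ) = (n + k * q) + q := by ring
      rw [h1, hz, ih]; push_cast; ring
  | pred k ih =>
      have h1 : n + (-(k : ℤ) - 1) * (q : ℤ) + (q : ℤ) = n + (-(k : ℤ)) * q := by ring
      have h2 := hz (n + (-(k : ℤ) - 1) * (q : ℤ))
      rw [h1] at h2
      push_cast at ih h2 ⊢
      linarith

lemma Vv_per (hC2 : ContDiff ℝ 2 (Function.uncurry h))
    (hper : ∀ a b : ℝ, h (a + 1) (b + 1) = h a b)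
    {z : ℤ → ℝ} (hz : IsConfig p q z) (m : ℤ) (k : ℤ) :
    Vv h z (k + m * (q : ℤ)) = Vv h z k := by
  unfold Vv
  have e1 : k + m * (q : ℤ) - 1 = (k - 1) + m * q := by ring
  have e2 : k + m * (q : ℤ) + 1 = (k + 1) + m * q := by ring
  rw [e1, e2, config_add_mul hz, config_add_mul hz, config_add_mul hz]
  rw [show (m : ℝ) * (p : ℝ) = ((m * p : ℤ) : ℝ) by push_cast; ring]
  rw [pd1_shift hC2 hper (m * p), pd2_shift hC2 hper (m * p)]

lemma le_ext {z z' : ℤ → ℝ} (hz : IsConfig p q z) (hz' : IsConfig p q z')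
    (hle : ∀ j : ℤ, 0 ≤ j → j < (q : ℤ) → z j ≤ z' j) (hq : 0 < q) (n : ℤ) :
    z n ≤ z' n := by
  have hrd : n % (q : ℤ) + (n / (q : ℤ)) * q = n := by
    rw [mul_comm]; exact Int.emod_add_mul_ediv n q
  have hq' : (q : ℤ) ≠ 0 := by exact_mod_cast hq.ne'
  have h0 : 0 ≤ n % (q : ℤ) := Int.emod_nonneg n hq'
  have h1 : n % (q : ℤ) < q := Int.emod_lt_of_pos n (by exact_mod_cast hq)
  have e1 := config_add_mul hz (n / (q : ℤ)) (n % (q : ℤ))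
  have e2 := config_add_mul hz' (n / (q : ℤ)) (n % (q : ℤ))
  rw [hrd] at e1 e2
  rw [e1, e2]
  linarith [hle _ h0 h1]

end Config
section Embed

variable {p : ℤ} {q : ℕ}

/-- Extension of a vector in `ℝ^q` to a `(p,q)`-configuration on `ℤ`. -/
noncomputable def ee (p : ℤ) (q : ℕ) (hq : 0 < q) (u : Fin q → ℝ) (n : ℤ) : ℝ :=
  u ⟨(n % (q : ℤ)).toNat, by
      have hq' : ((q : ℤ)) ≠ 0 := by exact_mod_cast hq.ne'
      have h0 : 0 ≤ n % (q : ℤ) := Int.emod_nonneg n hq'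
      have h1 : n % (q : ℤ) < q := Int.emod_lt_of_pos n (by exact_mod_cast hq)
      omega⟩ + ((n / (q : ℤ) : ℤ) : ℝ) * (p : ℝ)

lemma ee_config (hq : 0 < q) (u : Fin q → ℝ) : IsConfig p q (ee p q hq u) := by
  intro n
  have hq' : ((q : ℤ)) ≠ 0 := by exact_mod_cast hq.ne'
  have e1 : (n + (q : ℤ)) % (q : ℤ) = n % (q : ℤ) := by
    simpa using Int.add_mul_emod_self_left (a := n) (b := (q : ℤ)) (c := 1)
  have e2 : (n + (q : ℤ)) / (q : ℤ) = n / (q : ℤ) + 1 := by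
    simpa using Int.add_mul_ediv_left n 1 hq'
  unfold ee
  simp only [e1, e2]
  push_cast
  ring

lemma ee_eval (hq : 0 < q) (u : Fin q → ℝ) (k : Fin q) :
    ee p q hq u ((k : ℕ) : ℤ) = u k := by
  have h0 : (((k : ℕ) : ℤ)) % (q : ℤ) = ((k : ℕ) : ℤ) := by
    apply Int.emod_eq_of_lt (by positivity)
    exact_mod_cast k.isLt
  have h1 : (((k : ℕ) : ℤ)) / (q : ℤ) = 0 := by
    apply Int.ediv_eq_zero_of_lt (by positivity)
    exact_mod_cast k.isLt
  unfold ee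
  simp only [h0, h1]
  simp [Fin.ext_iff]

lemma ee_of_config (hq : 0 < q) {z : ℤ → ℝ} (hz : IsConfig p q z) (n : ℤ) :
    ee p q hq (fun k : Fin q => z ((k : ℕ) : ℤ)) n = z n := by
  have hq' : ((q : ℤ)) ≠ 0 := by exact_mod_cast hq.ne'
  have h0 : 0 ≤ n % (q : ℤ) := Int.emod_nonneg n hq'
  have htn : (((n % (q : ℤ)).toNat : ℕ) : ℤ) = n % (q : ℤ) := Int.toNat_of_nonneg h0
  have hrd : n % (q : ℤ) + (n / (q : ℤ)) * q = n := by
    rw [mul_comm]; exact Int.emod_add_mul_ediv n q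
  have e1 := config_add_mul hz (n / (q : ℤ)) (n % (q : ℤ))
  rw [hrd] at e1
  unfold ee
  simp only [htn]
  rw [e1]

lemma ee_cont (hq : 0 < q) (n : ℤ) : Continuous (fun u : Fin q → ℝ => ee p q hq u n) :=
  (continuous_apply _).add continuous_const

end Embed

section Helpers

lemma emod_zero_iff {q : ℕ} (hq : 0 < q) {a : ℤ} (h1 : -(q : ℤ) < a) (h2 : a ≤ q) :
    a % (q : ℤ) = 0 ↔ (a = 0 ∨ a = q) := by
  constructor
  · intro hmod
    obtain ⟨c, hc⟩ := Int.dvd_of_emod_eq_zero hmod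
    have hqpos : (0 : ℤ) < q := by exact_mod_cast hq
    have hcle : c ≤ 1 := by
      by_contra hcon
      push_neg at hcon
      have : (q : ℤ) * 1 < q * c := by
        apply mul_lt_mul_of_pos_left hcon hqpos
      rw [mul_one] at this
      omega
    have hcgt : -1 < c := by
      by_contra hcon
      push_neg at hcon
      have : (q : ℤ) * c ≤ q * (-1) := by
        apply mul_le_mul_of_nonneg_left hcon hqpos.le
      omega
    interval_cases c
    · left; omega
    · right; omega
  · rintro (rfl | rfl)
    · simp
    · simp

lemma sub_emod_zero_iff {q : ℕ} (hq : 0 < q) {a b : ℤ} (ha0 : 0 ≤ a) (haq : a < q)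
    (hb0 : 0 ≤ b) (hbq : b < q) : (a - b) % (q : ℤ) = 0 ↔ a = b := by
  rw [emod_zero_iff hq (by omega) (by omega)]
  omega

end Helpers

section Crit

variable {p : ℤ} {q : ℕ}

lemma fderiv_apply_pd (hC2 : ContDiff ℝ 2 (Function.uncurry h)) (a b s t : ℝ) :
    fderiv ℝ (Function.uncurry h) (a, b) (s, t) = s * pd1 h a b + t * pd2 h a b := by
  have hst : ((s, t) : ℝ × ℝ) = s • ((1 : ℝ), (0 : ℝ)) + t • ((0 : ℝ), (1 : ℝ)) := by
    simp [Prod.ext_iff]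
  rw [hst, map_add, map_smul, map_smul, ← pd1_eq hC2, ← pd2_eq hC2]
  simp [smul_eq_mul]

lemma crit (hC2 : ContDiff ℝ 2 (Function.uncurry h))
    (hper : ∀ a b : ℝ, h (a + 1) (b + 1) = h a b) (hq : 0 < q)
    {z : ℤ → ℝ} (hz : IsConfig p q z)
    (hmin : ∀ y : ℤ → ℝ, IsConfig p q y → W h q z ≤ W h q y) : Stationary h z := by
  have hqz : (0 : ℤ) < (q : ℤ) := by exact_mod_cast hq
  have main : ∀ k : ℤ, 0 ≤ k → k < (q : ℤ) → Vv h z k = 0 := by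
    intro k hk0 hkq
    set χ : ℤ → ℝ := fun n => if (n - k) % (q : ℤ) = 0 then 1 else 0 with hχ
    have hχper : ∀ n, χ (n + (q : ℤ)) = χ n := by
      intro n
      have : (n + (q : ℤ) - k) % (q : ℤ) = (n - k) % (q : ℤ) := by
        rw [show n + (q : ℤ) - k = (n - k) + (q : ℤ) * 1 by ring]
        exact Int.add_mul_emod_self_left (n - k) (q : ℤ) 1
      simp only [hχ, this]
    have hcfg : ∀ t : ℝ, IsConfig p q (fun n => z n + t * χ n) := by
      intro t n
      simp only [hz n, hχper n]
      ring
    set g : ℝ → ℝ := fun t => ∑ j ∈ Finset.range q,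
      h (z (j : ℤ) + t * χ (j : ℤ)) (z ((j : ℤ) + 1) + t * χ ((j : ℤ) + 1)) with hg
    have hgW : ∀ t, g t = W h q (fun n => z n + t * χ n) := fun t => rfl
    have hg0 : g 0 = W h q z := by
      rw [hgW]
      unfold W
      apply Finset.sum_congr rfl
      intro j _
      simp
    have hmin' : IsLocalMin g 0 := by
      apply Filter.Eventually.of_forall
      intro t
      rw [hgW t, hg0]
      exact hmin _ (hcfg t)
    set D : ℝ := ∑ j ∈ Finset.range q,
      (χ (j : ℤ) * pd1 h (z (j : ℤ)) (z ((j : ℤ) + 1))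
        + χ ((j : ℤ) + 1) * pd2 h (z (j : ℤ)) (z ((j : ℤ) + 1))) with hD
    have hder : HasDerivAt g D 0 := by
      apply HasDerivAt.fun_sum
      intro j _
      have hpair : HasDerivAt
          (fun t : ℝ => ((z (j : ℤ) + t * χ (j : ℤ), z ((j : ℤ) + 1) + t * χ ((j : ℤ) + 1)) : ℝ × ℝ))
          (χ (j : ℤ), χ ((j : ℤ) + 1)) 0 := by
        apply HasDerivAt.prodMk
        · simpa using (((hasDerivAt_id (0:ℝ)).mul_const (χ (j : ℤ))).const_add (z (j : ℤ)))
        · simpa using (((hasDerivAt_id (0:ℝ)).mul_const (χ ((j : ℤ) + 1))).const_add (z ((j : ℤ) + 1)))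
      have hH : DifferentiableAt ℝ (Function.uncurry h)
          ((z (j : ℤ) + 0 * χ (j : ℤ), z ((j : ℤ) + 1) + 0 * χ ((j : ℤ) + 1)) : ℝ × ℝ) :=
        (hC2.differentiable (by norm_num)).differentiableAt
      have hcomp := hH.hasFDerivAt.comp_hasDerivAt 0 hpair
      have heval : fderiv ℝ (Function.uncurry h)
          ((z (j : ℤ) + 0 * χ (j : ℤ), z ((j : ℤ) + 1) + 0 * χ ((j : ℤ) + 1)) : ℝ × ℝ)
          (χ (j : ℤ), χ ((j : ℤ) + 1))
          = χ (j : ℤ) * pd1 h (z (j : ℤ)) (z ((j : ℤ) + 1))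
            + χ ((j : ℤ) + 1) * pd2 h (z (j : ℤ)) (z ((j : ℤ) + 1)) := by
        rw [show (z (j : ℤ) + 0 * χ (j : ℤ)) = z (j : ℤ) by ring,
          show (z ((j : ℤ) + 1) + 0 * χ ((j : ℤ) + 1)) = z ((j : ℤ) + 1) by ring]
        exact fderiv_apply_pd hC2 _ _ _ _
      rw [heval] at hcomp
      exact hcomp
    have hD0 : D = 0 := hmin'.hasDerivAt_eq_zero hder
    -- now compute D
    have hsplit : D = (∑ j ∈ Finset.range q, χ (j : ℤ) * pd1 h (z (j : ℤ)) (z ((j : ℤ) + 1)))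
        + ∑ j ∈ Finset.range q, χ ((j : ℤ) + 1) * pd2 h (z (j : ℤ)) (z ((j : ℤ) + 1)) := by
      rw [hD, Finset.sum_add_distrib]
    have hS1 : (∑ j ∈ Finset.range q, χ (j : ℤ) * pd1 h (z (j : ℤ)) (z ((j : ℤ) + 1)))
        = pd1 h (z k) (z (k + 1)) := by
      rw [Finset.sum_eq_single_of_mem k.toNat (by simp [Finset.mem_range]; omega)]
      · have hkk : ((k.toNat : ℕ) : ℤ) = k := Int.toNat_of_nonneg hk0
        rw [hkk]
        have : χ k = 1 := by simp [hχ]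
        rw [this, one_mul]
      · intro j hj hne
        have hjq : (j : ℤ) < (q : ℤ) := by exact_mod_cast Finset.mem_range.mp hj
        have : χ (j : ℤ) = 0 := by
          simp only [hχ, ite_eq_right_iff]
          intro hcon
          rw [sub_emod_zero_iff hq (by positivity) hjq hk0 hkq] at hcon
          exact absurd (by omega : j = k.toNat) hne
        rw [this, zero_mul]
    have hS2 : (∑ j ∈ Finset.range q, χ ((j : ℤ) + 1) * pd2 h (z (j : ℤ)) (z ((j : ℤ) + 1)))
        = pd2 h (z (k - 1)) (z k) := by
      rcases eq_or_lt_of_le hk0 with hk0' | hk1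
      · -- k = 0, the special index is q - 1
        subst hk0'
        rw [Finset.sum_eq_single_of_mem (q - 1) (by simp [Finset.mem_range]; omega)]
        · have hq1 : (((q - 1 : ℕ) : ℤ)) = (q : ℤ) - 1 := by omega
          have hχ1 : χ (((q - 1 : ℕ) : ℤ) + 1) = 1 := by
            simp only [hχ, hq1]
            rw [show ((q : ℤ) - 1 + 1 - 0) = (0 : ℤ) + (q : ℤ) * 1 by ring,
              Int.add_mul_emod_self_left 0 (q : ℤ) 1]
            simp
          rw [hχ1, one_mul, hq1]
          have e1 : z ((q : ℤ) - 1) = z ((0 : ℤ) - 1) + (p : ℝ) := by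
            have := hz ((0 : ℤ) - 1)
            rw [show (0 : ℤ) - 1 + (q : ℤ) = (q : ℤ) - 1 by ring] at this
            exact this
          have e2 : z ((q : ℤ) - 1 + 1) = z (0 : ℤ) + (p : ℝ) := by
            have := hz 0
            rw [show (0 : ℤ) + (q : ℤ) = (q : ℤ) - 1 + 1 by ring] at this
            exact this
          rw [e1, e2]
          rw [show (p : ℝ) = ((p : ℤ) : ℝ) by norm_cast]
          exact pd2_shift hC2 hper p _ _
        · intro j hj hne
          have hjq : (j : ℤ) < (q : ℤ) := by exact_mod_cast Finset.mem_range.mp hj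
          have : χ ((j : ℤ) + 1) = 0 := by
            simp only [hχ, ite_eq_right_iff]
            intro hcon
            rw [emod_zero_iff hq (by omega) (by omega)] at hcon
            rcases hcon with hc | hc
            · omega
            · exact absurd (by omega : j = q - 1) hne
          rw [this, zero_mul]
      · -- 1 ≤ k, the special index is (k-1).toNat
        rw [Finset.sum_eq_single_of_mem (k - 1).toNat (by simp [Finset.mem_range]; omega)]
        · have hkk : (((k - 1).toNat : ℕ) : ℤ) = k - 1 := Int.toNat_of_nonneg (by omega)
          rw [hkk]
          have hχ1 : χ ((k - 1) + 1) = 1 := by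
            simp only [hχ]
            rw [show (k - 1 + 1 - k) = (0 : ℤ) by ring]
            simp
          rw [hχ1, one_mul, show k - 1 + 1 = k by ring]
        · intro j hj hne
          have hjq : (j : ℤ) < (q : ℤ) := by exact_mod_cast Finset.mem_range.mp hj
          have : χ ((j : ℤ) + 1) = 0 := by
            simp only [hχ, ite_eq_right_iff]
            intro hcon
            rw [emod_zero_iff hq (by omega) (by omega)] at hcon
            rcases hcon with hc | hc
            · exact absurd (by omega : j = (k - 1).toNat) hne
            · omega
          rw [this, zero_mul]
    have hfin : pd1 h (z k) (z (k + 1)) + pd2 h (z (k - 1)) (z k) = 0 := by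
      rw [← hS1, ← hS2]
      rw [hsplit] at hD0
      exact hD0
    unfold Vv
    linarith
  -- extend to all k by periodicity
  intro k
  show pd2 h (z (k - 1)) (z k) + pd1 h (z k) (z (k + 1)) = 0
  have hper' := Vv_per hC2 hper hz (k / (q : ℤ)) (k % (q : ℤ))
  have hrd : k % (q : ℤ) + (k / (q : ℤ)) * q = k := by
    rw [mul_comm]; exact Int.emod_add_mul_ediv k q
  rw [hrd] at hper'
  have h0 : 0 ≤ k % (q : ℤ) := Int.emod_nonneg k (by exact_mod_cast hq.ne')
  have h1 : k % (q : ℤ) < q := Int.emod_lt_of_pos k hqz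
  have := main _ h0 h1
  rw [← hper'] at this
  exact this

end Crit
section Touch

variable {p : ℤ} {q : ℕ}

lemma touch_step (hC2 : ContDiff ℝ 2 (Function.uncurry h)) {δ : ℝ} (hδ0 : 0 < δ)
    (hδ' : ∀ a b : ℝ, pd12 h a b ≤ -δ) {z z' : ℤ → ℝ}
    (hsz : Stationary h z) (hsz' : Stationary h z') (hle : ∀ n, z n ≤ z' n)
    {k : ℤ} (heq : z k = z' k) : z (k - 1) = z' (k - 1) ∧ z (k + 1) = z' (k + 1) := by
  have e1 := hsz k
  have e2 := hsz' k
  have d1 : 0 ≤ z' (k - 1) - z (k - 1) := by linarith [hle (k - 1)]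
  have d2 : 0 ≤ z' (k + 1) - z (k + 1) := by linarith [hle (k + 1)]
  have m1 := M1 hC2 hδ' (z (k - 1)) (z' k) (z' (k - 1) - z (k - 1)) d1
  rw [show z (k - 1) + (z' (k - 1) - z (k - 1)) = z' (k - 1) by ring] at m1
  have m2 := M2 hC2 hδ0.le hδ' (z' k) (z (k + 1)) (z' (k + 1) - z (k + 1)) d2
  rw [show z (k + 1) + (z' (k + 1) - z (k + 1)) = z' (k + 1) by ring] at m2
  rw [heq] at e1
  -- e1 : pd2 (z (k-1)) (z' k) + pd1 (z' k) (z (k+1)) = 0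
  -- e2 : pd2 (z' (k-1)) (z' k) + pd1 (z' k) (z' (k+1)) = 0
  -- m1 : pd2 (z' (k-1)) (z' k) ≤ pd2 (z (k-1)) (z' k) - δ * d1
  -- m2 : pd1 (z' k) (z' (k+1)) ≤ pd1 (z' k) (z (k+1)) - δ * d2
  have hsum : δ * (z' (k - 1) - z (k - 1)) + δ * (z' (k + 1) - z (k + 1)) ≤ 0 := by
    linarith
  have h1 : δ * (z' (k - 1) - z (k - 1)) ≥ 0 := mul_nonneg hδ0.le d1
  have h2 : δ * (z' (k + 1) - z (k + 1)) ≥ 0 := mul_nonneg hδ0.le d2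
  constructor
  · nlinarith
  · nlinarith

lemma touch (hC2 : ContDiff ℝ 2 (Function.uncurry h)) {δ : ℝ} (hδ0 : 0 < δ)
    (hδ' : ∀ a b : ℝ, pd12 h a b ≤ -δ) {z z' : ℤ → ℝ}
    (hsz : Stationary h z) (hsz' : Stationary h z') (hle : ∀ n, z n ≤ z' n)
    {k₀ : ℤ} (heq : z k₀ = z' k₀) : ∀ n, z n = z' n := by
  have fwd : ∀ m : ℕ, z (k₀ + m) = z' (k₀ + m) := by
    intro m
    induction m with
    | zero => simpa using heq
    | succ i ih =>
        have := (touch_step hC2 hδ0 hδ' hsz hsz' hle ih).2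
        rw [show (k₀ + (i : ℤ)) + 1 = k₀ + ((i : ℕ) + 1 : ℕ) by push_cast; ring] at this
        exact this
  have bwd : ∀ m : ℕ, z (k₀ - m) = z' (k₀ - m) := by
    intro m
    induction m with
    | zero => simpa using heq
    | succ i ih =>
        have := (touch_step hC2 hδ0 hδ' hsz hsz' hle ih).1
        rw [show (k₀ - (i : ℤ)) - 1 = k₀ - ((i : ℕ) + 1 : ℕ) by push_cast; ring] at this
        exact this
  intro n
  rcases le_or_gt k₀ n with hle' | hlt
  · have := fwd (n - k₀).toNat
    rwa [show k₀ + ((n - k₀).toNat : ℤ) = n by omega] at this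
  · have := bwd (k₀ - n).toNat
    rwa [show k₀ - ((k₀ - n).toNat : ℤ) = n by omega] at this

end Touch

section Deform

variable {p : ℤ} {q : ℕ}

lemma Vle (hC2 : ContDiff ℝ 2 (Function.uncurry h)) {C : ℝ}
    (hbd : ∀ v : ℝ × ℝ, ‖iteratedFDeriv ℝ 2 (Function.uncurry h) v‖ ≤ C)
    {δ : ℝ} (hδ0 : 0 < δ) (hδ' : ∀ a b : ℝ, pd12 h a b ≤ -δ)
    {x z : ℤ → ℝ} (hsx : Stationary h x) (hle : ∀ n, x n ≤ z n) (k : ℤ) :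
    Vv h z k ≤ 2 * C * (z k - x k) := by
  have hd : 0 ≤ z k - x k := by linarith [hle k]
  have m1 := M1 hC2 hδ' (x (k - 1)) (z k) (z (k - 1) - x (k - 1)) (by linarith [hle (k - 1)])
  rw [show x (k - 1) + (z (k - 1) - x (k - 1)) = z (k - 1) by ring] at m1
  have m2 := M2 hC2 hδ0.le hδ' (z k) (x (k + 1)) (z (k + 1) - x (k + 1))
    (by linarith [hle (k + 1)])
  rw [show x (k + 1) + (z (k + 1) - x (k + 1)) = z (k + 1) by ring] at m2
  have l1 : pd2 h (x (k - 1)) (z k) ≤ pd2 h (x (k - 1)) (x k) + C * (z k - x k) := by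
    have := pd2_lip hC2 hbd (x (k - 1)) (z k) (x (k - 1)) (x k)
    simp only [sub_self, abs_zero, zero_add] at this
    rw [abs_of_nonneg hd] at this
    have := abs_le.mp this
    linarith [this.1, this.2]
  have l2 : pd1 h (z k) (x (k + 1)) ≤ pd1 h (x k) (x (k + 1)) + C * (z k - x k) := by
    have := pd1_lip hC2 hbd (z k) (x (k + 1)) (x k) (x (k + 1))
    simp only [sub_self, abs_zero, add_zero] at this
    rw [abs_of_nonneg hd] at this
    have := abs_le.mp this
    linarith [this.1, this.2]
  have e := hsx k
  have hδd1 : 0 ≤ δ * (z (k - 1) - x (k - 1)) :=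
    mul_nonneg hδ0.le (by linarith [hle (k - 1)])
  have hδd2 : 0 ≤ δ * (z (k + 1) - x (k + 1)) :=
    mul_nonneg hδ0.le (by linarith [hle (k + 1)])
  unfold Vv
  linarith

lemma Vge (hC2 : ContDiff ℝ 2 (Function.uncurry h)) {C : ℝ}
    (hbd : ∀ v : ℝ × ℝ, ‖iteratedFDeriv ℝ 2 (Function.uncurry h) v‖ ≤ C)
    {δ : ℝ} (hδ0 : 0 < δ) (hδ' : ∀ a b : ℝ, pd12 h a b ≤ -δ)
    {x' z : ℤ → ℝ} (hsx' : Stationary h x') (hle : ∀ n, z n ≤ x' n) (k : ℤ) :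
    -(2 * C * (x' k - z k)) ≤ Vv h z k := by
  have hd : 0 ≤ x' k - z k := by linarith [hle k]
  have m1 := M1 hC2 hδ' (z (k - 1)) (z k) (x' (k - 1) - z (k - 1)) (by linarith [hle (k - 1)])
  rw [show z (k - 1) + (x' (k - 1) - z (k - 1)) = x' (k - 1) by ring] at m1
  have m2 := M2 hC2 hδ0.le hδ' (z k) (z (k + 1)) (x' (k + 1) - z (k + 1))
    (by linarith [hle (k + 1)])
  rw [show z (k + 1) + (x' (k + 1) - z (k + 1)) = x' (k + 1) by ring] at m2
  have l1 : pd2 h (x' (k - 1)) (x' k) - C * (x' k - z k) ≤ pd2 h (x' (k - 1)) (z k) := by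
    have := pd2_lip hC2 hbd (x' (k - 1)) (z k) (x' (k - 1)) (x' k)
    simp only [sub_self, abs_zero, zero_add] at this
    rw [show |z k - x' k| = x' k - z k by rw [abs_sub_comm]; exact abs_of_nonneg hd] at this
    have := abs_le.mp this
    linarith [this.1, this.2]
  have l2 : pd1 h (x' k) (x' (k + 1)) - C * (x' k - z k) ≤ pd1 h (z k) (x' (k + 1)) := by
    have := pd1_lip hC2 hbd (z k) (x' (k + 1)) (x' k) (x' (k + 1))
    simp only [sub_self, abs_zero, add_zero] at this
    rw [show |z k - x' k| = x' k - z k by rw [abs_sub_comm]; exact abs_of_nonneg hd] at this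
    have := abs_le.mp this
    linarith [this.1, this.2]
  have e := hsx' k
  have hδd1 : 0 ≤ δ * (x' (k - 1) - z (k - 1)) :=
    mul_nonneg hδ0.le (by linarith [hle (k - 1)])
  have hδd2 : 0 ≤ δ * (x' (k + 1) - z (k + 1)) :=
    mul_nonneg hδ0.le (by linarith [hle (k + 1)])
  unfold Vv
  linarith

lemma sum_shift {G : ℤ → ℝ} (hG : G (q : ℤ) = G 0) :
    ∑ j ∈ Finset.range q, G ((j : ℤ) + 1) = ∑ j ∈ Finset.range q, G (j : ℤ) := by
  have h1 : ∑ j ∈ Finset.range (q + 1), G (j : ℤ)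
      = (∑ j ∈ Finset.range q, G (j : ℤ)) + G (q : ℤ) := Finset.sum_range_succ _ q
  have h2 : ∑ j ∈ Finset.range (q + 1), G (j : ℤ)
      = (∑ j ∈ Finset.range q, G ((j : ℤ) + 1)) + G 0 := by
    rw [Finset.sum_range_succ' (fun j : ℕ => G (j : ℤ)) q]
    congr 1
  rw [h1, hG] at h2
  linarith

lemma dec (hC2 : ContDiff ℝ 2 (Function.uncurry h))
    (hper : ∀ a b : ℝ, h (a + 1) (b + 1) = h a b) {C : ℝ} (hC1 : 1 ≤ C)
    (hbd : ∀ v : ℝ × ℝ, ‖iteratedFDeriv ℝ 2 (Function.uncurry h) v‖ ≤ C)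
    (hq : 0 < q) {z : ℤ → ℝ} (hz : IsConfig p q z) :
    W h q (fun n => z n - 1 / (4 * C) * Vv h z n)
      ≤ W h q z - 1 / (8 * C) * ∑ j ∈ Finset.range q, (Vv h z (j : ℤ)) ^ 2 := by
  have hC0 : (0 : ℝ) < C := by linarith
  set s : ℝ := 1 / (4 * C) with hs
  set d : ℤ → ℝ := fun n => -(s * Vv h z n) with hd
  have hdper : ∀ n, d (n + (q : ℤ)) = d n := by
    intro n
    simp only [hd]
    rw [show n + (q : ℤ) = n + 1 * (q : ℤ) by ring, Vv_per hC2 hper hz 1 n]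
  have hdq : d (q : ℤ) = d 0 := by
    have := hdper 0
    rw [show (0 : ℤ) + (q : ℤ) = (q : ℤ) by ring] at this
    exact this
  have hterm : ∀ j ∈ Finset.range q,
      h (z (j : ℤ) + d (j : ℤ)) (z ((j : ℤ) + 1) + d ((j : ℤ) + 1))
        ≤ h (z (j : ℤ)) (z ((j : ℤ) + 1))
          + pd1 h (z (j : ℤ)) (z ((j : ℤ) + 1)) * d (j : ℤ)
          + pd2 h (z (j : ℤ)) (z ((j : ℤ) + 1)) * d ((j : ℤ) + 1)
          + C * (d (j : ℤ) ^ 2 + d ((j : ℤ) + 1) ^ 2) := by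
    intro j _
    exact taylor2D hC2 (by linarith) hbd _ _ _ _
  have hfun : (fun n => z n - 1 / (4 * C) * Vv h z n) = fun n => z n + d n := by
    funext n
    simp only [hd, hs]
    ring
  rw [hfun]
  have hW : W h q (fun n => z n + d n)
      = ∑ j ∈ Finset.range q,
        h (z (j : ℤ) + d (j : ℤ)) (z ((j : ℤ) + 1) + d ((j : ℤ) + 1)) := rfl
  rw [hW]
  have hsum := Finset.sum_le_sum hterm
  have hGq : pd2 h (z ((q : ℤ) - 1)) (z (q : ℤ)) * d (q : ℤ)
      = pd2 h (z ((0 : ℤ) - 1)) (z (0 : ℤ)) * d 0 := by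
    have e1 : z ((q : ℤ) - 1) = z ((0 : ℤ) - 1) + (p : ℝ) := by
      have := hz (0 - 1)
      rw [show (0 : ℤ) - 1 + (q : ℤ) = (q : ℤ) - 1 by ring] at this
      exact this
    have e2 : z (q : ℤ) = z 0 + (p : ℝ) := by
      have := hz 0
      rw [show (0 : ℤ) + (q : ℤ) = (q : ℤ) by ring] at this
      exact this
    rw [e1, e2, hdq, show (p : ℝ) = ((p : ℤ) : ℝ) by norm_cast, pd2_shift hC2 hper p]
  have hS2 : ∑ j ∈ Finset.range q, pd2 h (z (j : ℤ)) (z ((j : ℤ) + 1)) * d ((j : ℤ) + 1)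
      = ∑ j ∈ Finset.range q, pd2 h (z ((j : ℤ) - 1)) (z (j : ℤ)) * d (j : ℤ) := by
    have hsh := sum_shift (q := q) (G := fun i => pd2 h (z (i - 1)) (z i) * d i) hGq
    rw [← hsh]
    apply Finset.sum_congr rfl
    intro j _
    show _ = pd2 h (z ((j : ℤ) + 1 - 1)) (z ((j : ℤ) + 1)) * d ((j : ℤ) + 1)
    rw [show ((j : ℤ) + 1 - 1) = (j : ℤ) by ring]
  have hsq : ∑ j ∈ Finset.range q, d ((j : ℤ) + 1) ^ 2
      = ∑ j ∈ Finset.range q, d (j : ℤ) ^ 2 := by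
    apply sum_shift (q := q) (G := fun i => d i ^ 2)
    rw [hdq]
  have hA : (∑ j ∈ Finset.range q, pd1 h (z (j : ℤ)) (z ((j : ℤ) + 1)) * d (j : ℤ))
      + (∑ j ∈ Finset.range q, pd2 h (z ((j : ℤ) - 1)) (z (j : ℤ)) * d (j : ℤ))
      = -s * ∑ j ∈ Finset.range q, (Vv h z (j : ℤ)) ^ 2 := by
    rw [← Finset.sum_add_distrib, Finset.mul_sum]
    apply Finset.sum_congr rfl
    intro j _
    have hVdef : Vv h z (j : ℤ)
        = pd2 h (z ((j : ℤ) - 1)) (z (j : ℤ)) + pd1 h (z (j : ℤ)) (z ((j : ℤ) + 1)) := rfl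
    simp only [hd]
    rw [hVdef]
    ring
  have hB : ∑ j ∈ Finset.range q, C * (d (j : ℤ) ^ 2 + d ((j : ℤ) + 1) ^ 2)
      = 2 * C * s ^ 2 * ∑ j ∈ Finset.range q, (Vv h z (j : ℤ)) ^ 2 := by
    rw [← Finset.mul_sum, Finset.sum_add_distrib, hsq]
    have : ∑ j ∈ Finset.range q, d (j : ℤ) ^ 2
        = s ^ 2 * ∑ j ∈ Finset.range q, (Vv h z (j : ℤ)) ^ 2 := by
      rw [Finset.mul_sum]
      apply Finset.sum_congr rfl
      intro j _
      simp only [hd]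
      ring
    rw [this]
    ring
  have hsplit : ∑ j ∈ Finset.range q,
      (h (z (j : ℤ)) (z ((j : ℤ) + 1))
        + pd1 h (z (j : ℤ)) (z ((j : ℤ) + 1)) * d (j : ℤ)
        + pd2 h (z (j : ℤ)) (z ((j : ℤ) + 1)) * d ((j : ℤ) + 1)
        + C * (d (j : ℤ) ^ 2 + d ((j : ℤ) + 1) ^ 2))
      = (∑ j ∈ Finset.range q, h (z (j : ℤ)) (z ((j : ℤ) + 1)))
        + (∑ j ∈ Finset.range q, pd1 h (z (j : ℤ)) (z ((j : ℤ) + 1)) * d (j : ℤ))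
        + (∑ j ∈ Finset.range q, pd2 h (z (j : ℤ)) (z ((j : ℤ) + 1)) * d ((j : ℤ) + 1))
        + ∑ j ∈ Finset.range q, C * (d (j : ℤ) ^ 2 + d ((j : ℤ) + 1) ^ 2) := by
    rw [Finset.sum_add_distrib, Finset.sum_add_distrib, Finset.sum_add_distrib]
  have hWz : W h q z = ∑ j ∈ Finset.range q, h (z (j : ℤ)) (z ((j : ℤ) + 1)) := rfl
  rw [hsplit, hS2] at hsum
  have hnum : (∑ j ∈ Finset.range q, h (z (j : ℤ)) (z ((j : ℤ) + 1)))
        + (∑ j ∈ Finset.range q, pd1 h (z (j : ℤ)) (z ((j : ℤ) + 1)) * d (j : ℤ))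
        + (∑ j ∈ Finset.range q, pd2 h (z ((j : ℤ) - 1)) (z (j : ℤ)) * d (j : ℤ))
        + ∑ j ∈ Finset.range q, C * (d (j : ℤ) ^ 2 + d ((j : ℤ) + 1) ^ 2)
      = W h q z + (-s + 2 * C * s ^ 2) * ∑ j ∈ Finset.range q, (Vv h z (j : ℤ)) ^ 2 := by
    rw [hB, hWz]
    linear_combination hA
  rw [hnum] at hsum
  have hcoef : -s + 2 * C * s ^ 2 = -(1 / (8 * C)) := by
    rw [hs]
    field_simp
    ring
  rw [hcoef] at hsum
  linarith

end Deform
section BoxLemmas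

variable {p : ℤ} {q : ℕ}

lemma box_le (hq : 0 < q) {x : ℤ → ℝ} (hx : IsConfig p q x)
    {u : Fin q → ℝ} (hu : ∀ k : Fin q, x ((k : ℕ) : ℤ) ≤ u k) (n : ℤ) :
    x n ≤ ee p q hq u n := by
  apply le_ext hx (ee_config hq u) ?_ hq n
  intro j hj0 hjq
  have hjq' : j.toNat < q := by omega
  have hcast : (((⟨j.toNat, hjq'⟩ : Fin q) : ℕ) : ℤ) = j := by simp; omega
  have he := ee_eval (p := p) hq u ⟨j.toNat, hjq'⟩
  rw [hcast] at he
  rw [he]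
  have := hu ⟨j.toNat, hjq'⟩
  rwa [hcast] at this

lemma box_ge (hq : 0 < q) {x' : ℤ → ℝ} (hx' : IsConfig p q x')
    {u : Fin q → ℝ} (hu : ∀ k : Fin q, u k ≤ x' ((k : ℕ) : ℤ)) (n : ℤ) :
    ee p q hq u n ≤ x' n := by
  apply le_ext (ee_config hq u) hx' ?_ hq n
  intro j hj0 hjq
  have hjq' : j.toNat < q := by omega
  have hcast : (((⟨j.toNat, hjq'⟩ : Fin q) : ℕ) : ℤ) = j := by simp; omega
  have he := ee_eval (p := p) hq u ⟨j.toNat, hjq'⟩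
  rw [hcast] at he
  rw [he]
  have := hu ⟨j.toNat, hjq'⟩
  rwa [hcast] at this

lemma ee_zero (hq : 0 < q) (u : Fin q → ℝ) : ee p q hq u 0 = u ⟨0, hq⟩ := by
  have := ee_eval (p := p) hq u ⟨0, hq⟩
  simpa using this

lemma stationary_of_V_vanish (hC2 : ContDiff ℝ 2 (Function.uncurry h))
    (hper : ∀ a b : ℝ, h (a + 1) (b + 1) = h a b) (hq : 0 < q)
    {z : ℤ → ℝ} (hz : IsConfig p q z)
    (hV : ∀ j : ℕ, j < q → Vv h z ((j : ℕ) : ℤ) = 0) : Stationary h z := by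
  intro k
  show pd2 h (z (k - 1)) (z k) + pd1 h (z k) (z (k + 1)) = 0
  have hqz : (0 : ℤ) < (q : ℤ) := by exact_mod_cast hq
  have hper' := Vv_per hC2 hper hz (k / (q : ℤ)) (k % (q : ℤ))
  have hrd : k % (q : ℤ) + (k / (q : ℤ)) * q = k := by
    rw [mul_comm]; exact Int.emod_add_mul_ediv k q
  rw [hrd] at hper'
  have h0 : 0 ≤ k % (q : ℤ) := Int.emod_nonneg k (by exact_mod_cast hq.ne')
  have h1 : k % (q : ℤ) < q := Int.emod_lt_of_pos k hqz
  have := hV (k % (q : ℤ)).toNat (by omega)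
  rw [show (((k % (q : ℤ)).toNat : ℕ) : ℤ) = k % (q : ℤ) by omega] at this
  rw [← hper'] at this
  exact this

lemma ee_apply (hq : 0 < q) (u : Fin q → ℝ) (n : ℤ) (pf : (n % (q : ℤ)).toNat < q) :
    ee p q hq u n = u ⟨(n % (q : ℤ)).toNat, pf⟩ + ((n / (q : ℤ) : ℤ) : ℝ) * (p : ℝ) := rfl

end BoxLemmas
/-- Remark 2.1: under a uniform twist condition, bounded second derivatives, and
the Morse (nondegeneracy) assumption, between any two consecutive global
(p,q)-minimizers there is a stationary configuration (a minimaximizer) that is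
not a global minimizer. -/
theorem exists_minimaximizer_between_consecutive_minimizers
    (p : ℤ) (q : ℕ) (hq : 0 < q) (hpq : IsCoprime p (q : ℤ))
    (h : ℝ → ℝ → ℝ) (hC2 : ContDiff ℝ 2 (Function.uncurry h))
    (htwist : ∀ a b : ℝ, pd12 h a b < 0)
    (hper : ∀ a b : ℝ, h (a + 1) (b + 1) = h a b)
    (hδ : ∃ δ : ℝ, 0 < δ ∧ ∀ a b : ℝ, pd12 h a b ≤ -δ)
    (hbd : ∃ C : ℝ, ∀ v : ℝ × ℝ, ‖iteratedFDeriv ℝ 2 (Function.uncurry h) v‖ ≤ C)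
    (hMorse : ∀ z : ℤ → ℝ, IsConfig p q z → Stationary h z →
      ∀ u : Fin q → ℝ,
        (∀ w : Fin q → ℝ,
          fderiv ℝ (fderiv ℝ (Phi h p hq)) (fun i : Fin q => z ((i : ℕ) : ℤ)) u w = 0) →
        u = 0)
    (x x' : ℤ → ℝ) (hx : IsConfig p q x) (hx' : IsConfig p q x')
    (hxmin : ∀ y : ℤ → ℝ, IsConfig p q y → W h q x ≤ W h q y)
    (hx'min : ∀ y : ℤ → ℝ, IsConfig p q y → W h q x' ≤ W h q y)
    (hlt : ∀ k : ℤ, x k < x' k)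
    (hcons : ¬ ∃ w : ℤ → ℝ, IsConfig p q w ∧
      (∀ y : ℤ → ℝ, IsConfig p q y → W h q w ≤ W h q y) ∧
      (∀ k : ℤ, x k < w k) ∧ (∀ k : ℤ, w k < x' k)) :
    ∃ y : ℤ → ℝ, IsConfig p q y ∧ Stationary h y ∧
      (∀ k : ℤ, x k < y k) ∧ (∀ k : ℤ, y k < x' k) ∧
      ¬ (∀ w : ℤ → ℝ, IsConfig p q w → W h q y ≤ W h q w) := by
  classical
  by_contra hgoal
  push_neg at hgoal
  -- hgoal : ∀ y, IsConfig → Stationary → strict → strict → global min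
  obtain ⟨δ, hδ0, hδ'⟩ := hδ
  obtain ⟨C₀, hbd₀⟩ := hbd
  set C : ℝ := max C₀ 1 with hC
  have hC1 : (1 : ℝ) ≤ C := le_max_right _ _
  have hC0 : (0 : ℝ) < C := by linarith
  have hbdC : ∀ v : ℝ × ℝ, ‖iteratedFDeriv ℝ 2 (Function.uncurry h) v‖ ≤ C :=
    fun v => le_trans (hbd₀ v) (le_max_left _ _)
  have hsx : Stationary h x := crit hC2 hper hq hx hxmin
  have hsx' : Stationary h x' := crit hC2 hper hq hx' hx'min
  set m : ℝ := W h q x with hm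
  set xv : Fin q → ℝ := fun k => x ((k : ℕ) : ℤ) with hxv
  set xv' : Fin q → ℝ := fun k => x' ((k : ℕ) : ℤ) with hxv'
  have heex : ∀ n, ee p q hq xv n = x n := ee_of_config hq hx
  have heex' : ∀ n, ee p q hq xv' n = x' n := ee_of_config hq hx'
  set f : (Fin q → ℝ) → ℝ := fun u => W h q (ee p q hq u) with hf
  have hfcont : Continuous f := by
    have hfeq : f = fun u => ∑ j ∈ Finset.range q,
        h (ee p q hq u ((j : ℕ) : ℤ)) (ee p q hq u (((j : ℕ) : ℤ) + 1)) := rfl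
    rw [hfeq]
    apply continuous_finset_sum
    intro j _
    exact hC2.continuous.comp ((ee_cont hq _).prodMk (ee_cont hq _))
  have hVcont : ∀ k : ℤ, Continuous (fun u : Fin q → ℝ => Vv h (ee p q hq u) k) := by
    intro k
    apply Continuous.add
    · exact (pd2_cont hC2).comp ((ee_cont hq _).prodMk (ee_cont hq _))
    · exact (pd1_cont hC2).comp ((ee_cont hq _).prodMk (ee_cont hq _))
  set box : Set (Fin q → ℝ) := Set.Icc xv xv' with hbox
  have hxvbox : xv ∈ box := Set.mem_Icc.mpr ⟨le_refl _, fun k => (hlt _).le⟩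
  have hxv'box : xv' ∈ box := Set.mem_Icc.mpr ⟨fun k => (hlt _).le, le_refl _⟩
  have hboxcomp : IsCompact box := isCompact_Icc
  -- strict separation helpers
  have hstrictlo : ∀ z : ℤ → ℝ, IsConfig p q z → Stationary h z →
      (∀ n, x n ≤ z n) → z 0 ≠ x 0 → ∀ n, x n < z n := by
    intro z hzc hzs hlez hne n
    rcases lt_or_eq_of_le (hlez n) with hlt' | heq'
    · exact hlt'
    · exact absurd ((touch hC2 hδ0 hδ' hsx hzs hlez heq') 0).symm hne
  have hstricthi : ∀ z : ℤ → ℝ, IsConfig p q z → Stationary h z →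
      (∀ n, z n ≤ x' n) → z 0 ≠ x' 0 → ∀ n, z n < x' n := by
    intro z hzc hzs hlez hne n
    rcases lt_or_eq_of_le (hlez n) with hlt' | heq'
    · exact hlt'
    · exact absurd ((touch hC2 hδ0 hδ' hzs hsx' hlez heq') 0) hne
  have hfm : ∀ u, m ≤ f u := fun u => hxmin _ (ee_config hq u)
  -- the middle slice
  set mid : ℝ := (x 0 + x' 0) / 2 with hmid
  have hmidlo : x 0 < mid := by have := hlt 0; simp only [hmid]; linarith
  have hmidhi : mid < x' 0 := by have := hlt 0; simp only [hmid]; linarith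
  set K : Set (Fin q → ℝ) := box ∩ {u | u ⟨0, hq⟩ = mid} with hK
  have hKcomp : IsCompact K :=
    hboxcomp.inter_right (isClosed_eq (continuous_apply _) continuous_const)
  have hKne : K.Nonempty := by
    refine ⟨Function.update xv ⟨0, hq⟩ mid, ⟨Set.mem_Icc.mpr ⟨?_, ?_⟩, ?_⟩⟩
    · intro k
      by_cases hk : k = ⟨0, hq⟩
      · subst hk
        rw [Function.update_self]
        exact hmidlo.le
      · rw [Function.update_of_ne hk]
    · intro k
      by_cases hk : k = ⟨0, hq⟩
      · subst hk
        rw [Function.update_self]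
        have : xv' ⟨0, hq⟩ = x' 0 := by simp [hxv']
        rw [this]
        exact hmidhi.le
      · rw [Function.update_of_ne hk]
        exact (hlt _).le
    · exact Function.update_self _ _ _
  obtain ⟨uκ, huκK, huκmin⟩ := hKcomp.exists_isMinOn hKne hfcont.continuousOn
  set κ : ℝ := f uκ with hκ
  have huκbox : uκ ∈ box := huκK.1
  have huκlo : ∀ n, x n ≤ ee p q hq uκ n :=
    box_le hq hx (fun k => (Set.mem_Icc.mp huκbox).1 k) 
  have huκhi : ∀ n, ee p q hq uκ n ≤ x' n :=
    box_ge hq hx' (fun k => (Set.mem_Icc.mp huκbox).2 k)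
  have hee0κ : ee p q hq uκ 0 = mid := by rw [ee_zero hq uκ]; exact huκK.2
  have hκm : m < κ := by
    rcases lt_or_eq_of_le (hfm uκ) with hlt' | heq'
    · exact hlt'
    · exfalso
      have hglob : ∀ y, IsConfig p q y → W h q (ee p q hq uκ) ≤ W h q y := by
        intro y hy
        have hWm : W h q (ee p q hq uκ) = m := heq'.symm
        rw [hWm]
        exact hxmin y hy
      have hstat := crit hC2 hper hq (ee_config hq uκ) hglob
      have hne0 : ee p q hq uκ 0 ≠ x 0 := by rw [hee0κ]; exact hmidlo.ne'
      have hne0' : ee p q hq uκ 0 ≠ x' 0 := by rw [hee0κ]; exact hmidhi.ne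
      exact hcons ⟨ee p q hq uκ, ee_config hq uκ, hglob,
        hstrictlo _ (ee_config hq uκ) hstat huκlo hne0,
        hstricthi _ (ee_config hq uκ) hstat huκhi hne0'⟩
  set θ : ℝ := (m + κ) / 2 with hθ
  have hmθ : m < θ := by simp only [hθ]; linarith
  have hθκ : θ < κ := by simp only [hθ]; linarith
  -- the region where the gradient is large
  set R : Set (Fin q → ℝ) := box ∩ {u | θ ≤ f u} with hR
  have hRcomp : IsCompact R := hboxcomp.inter_right (isClosed_le continuous_const hfcont)
  have hRne : R.Nonempty := ⟨uκ, huκbox, by simp only [Set.mem_setOf_eq]; linarith⟩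
  set Q : (Fin q → ℝ) → ℝ := fun u => ∑ j ∈ Finset.range q,
    (Vv h (ee p q hq u) ((j : ℕ) : ℤ)) ^ 2 with hQ
  have hQcont : Continuous Q := by
    apply continuous_finset_sum
    intro j _
    exact (hVcont _).pow 2
  have hQnonneg : ∀ u, 0 ≤ Q u := fun u => Finset.sum_nonneg fun j _ => sq_nonneg _
  obtain ⟨uμ, huμR, huμmin⟩ := hRcomp.exists_isMinOn hRne hQcont.continuousOn
  set μ2 : ℝ := Q uμ with hμ2
  have hμ2pos : 0 < μ2 := by
    rcases lt_or_eq_of_le (hQnonneg uμ) with hlt' | heq'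
    · exact hlt'
    · exfalso
      -- ee uμ is then a stationary configuration in the box with f value ≥ θ > m
      set z : ℤ → ℝ := ee p q hq uμ with hz
      have hzc : IsConfig p q z := ee_config hq uμ
      have hVzero : ∀ j : ℕ, j < q → Vv h z ((j : ℕ) : ℤ) = 0 := by
        intro j hj
        have hsum : ∑ i ∈ Finset.range q, (Vv h (ee p q hq uμ) ((i : ℕ) : ℤ)) ^ 2 = 0 :=
          heq'.symm
        have := (Finset.sum_eq_zero_iff_of_nonneg fun i _ => sq_nonneg _).mp hsum j
          (Finset.mem_range.mpr hj)
        exact pow_eq_zero_iff (by norm_num) |>.mp this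
      have hzs : Stationary h z := stationary_of_V_vanish hC2 hper hq hzc hVzero
      have hzlo : ∀ n, x n ≤ z n :=
        box_le hq hx (fun k => (Set.mem_Icc.mp huμR.1).1 k)
      have hzhi : ∀ n, z n ≤ x' n :=
        box_ge hq hx' (fun k => (Set.mem_Icc.mp huμR.1).2 k)
      have hθf : θ ≤ f uμ := huμR.2
      by_cases hA : z 0 = x 0
      · have hall := touch hC2 hδ0 hδ' hsx hzs hzlo hA.symm
        have : f uμ = m := by
          have hzz : ee p q hq uμ = x := funext fun n => (hall n).symm
          simp only [hf]
          rw [hzz]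
        linarith
      by_cases hB : z 0 = x' 0
      · have hall := touch hC2 hδ0 hδ' hzs hsx' hzhi hB
        have : f uμ = W h q x' := by
          have hzz : ee p q hq uμ = x' := funext hall
          simp only [hf]
          rw [hzz]
        have hmm : W h q x' = m := le_antisymm (hx'min x hx) (hxmin x' hx')
        linarith
      · have hstr1 := hstrictlo z hzc hzs hzlo hA
        have hstr2 := hstricthi z hzc hzs hzhi hB
        have hglob := hgoal z hzc hzs hstr1 hstr2
        exact hcons ⟨z, hzc, hglob, hstr1, hstr2⟩
  -- maximum of f on the box
  obtain ⟨uM, huM, huMmax⟩ := hboxcomp.exists_isMaxOn ⟨xv, hxvbox⟩ hfcont.continuousOn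
  set M₀ : ℝ := f uM with hM₀
  set δ₀ : ℝ := 1 / (8 * C) * μ2 with hδ₀
  have hδ₀pos : 0 < δ₀ := by
    apply mul_pos _ hμ2pos
    positivity
  obtain ⟨N, hN⟩ := exists_nat_gt ((M₀ - θ) / δ₀)
  have hNθ : M₀ - N * δ₀ < θ := by
    have := (div_lt_iff₀ hδ₀pos).mp hN
    linarith
  -- the deformation map
  set T : (Fin q → ℝ) → (Fin q → ℝ) :=
    fun u k => u k - 1 / (4 * C) * Vv h (ee p q hq u) ((k : ℕ) : ℤ) with hT
  have hTcont : Continuous T := by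
    apply continuous_pi
    intro k
    exact (continuous_apply k).sub (continuous_const.mul (hVcont _))
  have heeT : ∀ u, ee p q hq (T u)
      = fun n => ee p q hq u n - 1 / (4 * C) * Vv h (ee p q hq u) n := by
    intro u
    funext n
    have hq' : ((q : ℤ)) ≠ 0 := by exact_mod_cast hq.ne'
    have h0 : 0 ≤ n % (q : ℤ) := Int.emod_nonneg n hq'
    have hVn : Vv h (ee p q hq u) (n % (q : ℤ)) = Vv h (ee p q hq u) n := by
      have := Vv_per hC2 hper (ee_config (p := p) hq u) (n / (q : ℤ)) (n % (q : ℤ))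
      rw [show n % (q : ℤ) + (n / (q : ℤ)) * q = n by rw [mul_comm]; exact Int.emod_add_mul_ediv n q]
        at this
      exact this.symm
    have h1 : n % (q : ℤ) < q := Int.emod_lt_of_pos n (by exact_mod_cast hq)
    have pf : (n % (q : ℤ)).toNat < q := by omega
    rw [ee_apply hq (T u) n pf, ee_apply hq u n pf]
    have hTval : T u ⟨(n % (q : ℤ)).toNat, pf⟩
        = u ⟨(n % (q : ℤ)).toNat, pf⟩
          - 1 / (4 * C) * Vv h (ee p q hq u) (((⟨(n % (q : ℤ)).toNat, pf⟩ : Fin q) : ℕ) : ℤ) := rfl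
    rw [hTval]
    have hcast : (((⟨(n % (q : ℤ)).toNat, pf⟩ : Fin q) : ℕ) : ℤ) = n % (q : ℤ) := by
      simp
      omega
    rw [hcast, hVn]
    ring
  -- fixed points
  have hVx : ∀ k : ℤ, Vv h x k = 0 := fun k => hsx k
  have hTx : T xv = xv := by
    funext k
    simp only [hT]
    have : ee p q hq xv = x := funext heex
    rw [this, hVx]
    ring
  have hTx' : T xv' = xv' := by
    funext k
    simp only [hT]
    have : ee p q hq xv' = x' := funext heex'
    rw [this]
    rw [show Vv h x' ((k : ℕ) : ℤ) = 0 from hsx' _]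
    ring
  -- invariance and decrease along the iteration
  have hiter : ∀ u ∈ box, ∀ n : ℕ,
      (T^[n] u) ∈ box ∧ (f (T^[n] u) ≤ θ ∨ f (T^[n] u) ≤ M₀ - n * δ₀) := by
    intro u hu n
    induction n with
    | zero =>
        refine ⟨by simpa using hu, Or.inr ?_⟩
        simp only [Function.iterate_zero, id_eq, Nat.cast_zero, zero_mul, sub_zero]
        exact isMaxOn_iff.mp huMmax u hu
    | succ n ih =>
        obtain ⟨hvbox, hvdec⟩ := ih
        set v : Fin q → ℝ := T^[n] u with hv
        have hvlo : ∀ i, x i ≤ ee p q hq v i :=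
          box_le hq hx (fun k => (Set.mem_Icc.mp hvbox).1 k)
        have hvhi : ∀ i, ee p q hq v i ≤ x' i :=
          box_ge hq hx' (fun k => (Set.mem_Icc.mp hvbox).2 k)
        have hitso : T^[n + 1] u = T v := by rw [Function.iterate_succ_apply']
        have hVle : ∀ i : ℤ, Vv h (ee p q hq v) i ≤ 2 * C * (ee p q hq v i - x i) :=
          Vle hC2 hbdC hδ0 hδ' hsx hvlo
        have hVge : ∀ i : ℤ, -(2 * C * (x' i - ee p q hq v i)) ≤ Vv h (ee p q hq v) i :=
          Vge hC2 hbdC hδ0 hδ' hsx' hvhi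
        have hbox' : T v ∈ box := by
          apply Set.mem_Icc.mpr
          constructor
          · intro k
            have hVk := hVle ((k : ℕ) : ℤ)
            have hek : ee p q hq v ((k : ℕ) : ℤ) = v k := ee_eval (p := p) hq v k
            have hnum : 1 / (4 * C) * (2 * C * (v k - xv k)) = (v k - xv k) / 2 := by
              field_simp
              ring
            have hge : xv k ≤ v k := (Set.mem_Icc.mp hvbox).1 k
            have hstep : 1 / (4 * C) * Vv h (ee p q hq v) ((k : ℕ) : ℤ)
                ≤ 1 / (4 * C) * (2 * C * (v k - xv k)) := by
              apply mul_le_mul_of_nonneg_left _ (by positivity)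
              rw [← hek]
              exact hVk
            show xv k ≤ v k - 1 / (4 * C) * Vv h (ee p q hq v) ((k : ℕ) : ℤ)
            rw [hnum] at hstep
            linarith
          · intro k
            have hVk := hVge ((k : ℕ) : ℤ)
            have hek : ee p q hq v ((k : ℕ) : ℤ) = v k := ee_eval (p := p) hq v k
            have hnum : 1 / (4 * C) * (2 * C * (xv' k - v k)) = (xv' k - v k) / 2 := by
              field_simp
              ring
            have hge : v k ≤ xv' k := (Set.mem_Icc.mp hvbox).2 k
            have hstep : -(1 / (4 * C) * (2 * C * (xv' k - v k)))
                ≤ 1 / (4 * C) * Vv h (ee p q hq v) ((k : ℕ) : ℤ) := by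
              rw [show -(1 / (4 * C) * (2 * C * (xv' k - v k)))
                  = 1 / (4 * C) * (-(2 * C * (xv' k - v k))) by ring]
              apply mul_le_mul_of_nonneg_left _ (by positivity)
              rw [← hek]
              exact hVk
            show v k - 1 / (4 * C) * Vv h (ee p q hq v) ((k : ℕ) : ℤ) ≤ xv' k
            rw [hnum] at hstep
            linarith
        have hdecW : f (T v) ≤ f v - 1 / (8 * C) * Q v := by
          have hd := dec hC2 hper hC1 hbdC hq (ee_config (p := p) hq v)
          simp only [hf]
          rw [heeT v]
          exact hd
        rw [hitso]
        refine ⟨hbox', ?_⟩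
        by_cases hθv : f v ≤ θ
        · left
          have : 0 ≤ 1 / (8 * C) * Q v := by
            apply mul_nonneg (by positivity) (hQnonneg v)
          linarith
        · right
          push_neg at hθv
          have hvR : v ∈ R := ⟨hvbox, le_of_lt hθv⟩
          have hQv : μ2 ≤ Q v := isMinOn_iff.mp huμmin v hvR
          have hfv : f v ≤ M₀ - n * δ₀ := by
            rcases hvdec with hcase | hcase
            · linarith
            · exact hcase
          have hstep : 1 / (8 * C) * μ2 ≤ 1 / (8 * C) * Q v :=
            mul_le_mul_of_nonneg_left hQv (by positivity)
          have : f (T v) ≤ M₀ - n * δ₀ - δ₀ := by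
            rw [hδ₀] at hfv ⊢
            linarith
          push_cast
          linarith
  -- the path and the intermediate value theorem
  set γ : ℝ → (Fin q → ℝ) := fun t k => (1 - t) * xv k + t * xv' k with hγ
  have hγcont : Continuous γ := by
    apply continuous_pi
    intro k
    exact ((continuous_const.sub continuous_id).mul continuous_const).add
      (continuous_id.mul continuous_const)
  have hγbox : ∀ t ∈ Set.Icc (0 : ℝ) 1, γ t ∈ box := by
    intro t ht
    obtain ⟨ht0, ht1⟩ := ht
    apply Set.mem_Icc.mpr
    constructor
    · intro k
      have := (hlt ((k : ℕ) : ℤ)).le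
      show xv k ≤ (1 - t) * xv k + t * xv' k
      nlinarith [this]
    · intro k
      have := (hlt ((k : ℕ) : ℤ)).le
      show (1 - t) * xv k + t * xv' k ≤ xv' k
      nlinarith [this]
  set φ : ℝ → ℝ := fun t => (T^[N] (γ t)) ⟨0, hq⟩ with hφ
  have hφcont : Continuous φ :=
    (continuous_apply _).comp ((hTcont.iterate N).comp hγcont)
  have hγ0 : γ 0 = xv := by funext k; simp [hγ]
  have hγ1 : γ 1 = xv' := by funext k; simp [hγ]
  have hφ0 : φ 0 = x 0 := by
    simp only [hφ, hγ0]
    rw [Function.iterate_fixed hTx N]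
    simp [hxv]
  have hφ1 : φ 1 = x' 0 := by
    simp only [hφ, hγ1]
    rw [Function.iterate_fixed hTx' N]
    simp [hxv']
  have hmem : mid ∈ Set.Icc (φ 0) (φ 1) := by
    rw [hφ0, hφ1]
    exact ⟨hmidlo.le, hmidhi.le⟩
  have hIVT := intermediate_value_Icc (zero_le_one) hφcont.continuousOn
  obtain ⟨t₀, ht₀, hφt₀⟩ := hIVT hmem
  set u₀ : Fin q → ℝ := T^[N] (γ t₀) with hu₀
  obtain ⟨hu₀box, hu₀dec⟩ := hiter (γ t₀) (hγbox t₀ ht₀) N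
  have hu₀K : u₀ ∈ K := ⟨hu₀box, hφt₀⟩
  have hκu₀ : κ ≤ f u₀ := isMinOn_iff.mp huκmin u₀ hu₀K
  rcases hu₀dec with hcase | hcase
  · linarith
  · linarith
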